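/- If f ∈ ℝ[x,y] is a polynomial of degree n whose degree-n homogeneous part f_n is elliptic (i.e., Hess f_n ≥ 0 everywhere and Hess f_n vanishes only at the origin), then the Hessian curve {(x,y) ∈ ℝ² : Hess f(x,y) = 0} is compact, and there exists R > 0 such that Hess f(x,y) > 0 whenever x² + y² > R². -/

import Mathlib

/-!
Split `f = f_n + r` with `deg r ≤ n - 1`. Expanding the Hessian, `Hess f - Hess f_n` is a sum of
products of a second derivative of degree `≤ n - 2` with one of `r` (degree `≤ n - 3`), so it has
degree `≤ 2n - 5` and grows like `O(|v| ^ (2n - 5))`. Since `Hess f_n` is homogeneous of degree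
`2n - 4` and positive on the unit circle, it is bounded below by `c |v| ^ (2n - 4)` with `c > 0`.
Hence `Hess f > 0` outside a large disc, and the Hessian curve, being closed and contained in that
disc, is compact.
-/

open MvPolynomial

/-- The Hessian determinant `f_xx f_yy - f_xy ^ 2` of a polynomial in two variables. -/
noncomputable def Hess (P : MvPolynomial (Fin 2) ℝ) : MvPolynomial (Fin 2) ℝ :=
  pderiv 0 (pderiv 0 P) * pderiv 1 (pderiv 1 P) - (pderiv 0 (pderiv 1 P)) ^ 2

namespace MvPolynomial

theorem totalDegree_pderiv_le {σ R : Type*} [CommSemiring R] (p : MvPolynomial σ R) (i : σ) :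
    (pderiv i p).totalDegree ≤ p.totalDegree - 1 := by
  refine Finset.sup_le fun m hm => ?_
  rw [mem_support_iff, coeff_pderiv] at hm
  have hdeg : (m + Finsupp.single i 1).degree ≤ p.totalDegree :=
    le_totalDegree (mem_support_iff.2 (left_ne_zero_of_mul hm))
  have hsum : (m + Finsupp.single i 1).degree = m.degree + 1 := by
    rw [map_add, Finsupp.degree_single]
  change m.degree ≤ _
  omega

theorem totalDegree_sub_homogeneousComponent_le {σ R : Type*} [CommRing R] {p : MvPolynomial σ R} {n : ℕ}
    (hp : p.totalDegree ≤ n) : (p - homogeneousComponent n p).totalDegree ≤ n - 1 := by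
  refine Finset.sup_le fun m hm => ?_
  rw [mem_support_iff, coeff_sub, coeff_homogeneousComponent] at hm
  have hne : m.degree ≠ n := fun h => hm (by simp [h])
  have hle : m.degree ≤ p.totalDegree :=
    le_totalDegree (mem_support_iff.2 fun h => hm (by simp [h]))
  change m.degree ≤ _
  omega

theorem IsHomogeneous.eval_smul {σ R : Type*} [CommSemiring R] {φ : MvPolynomial σ R} {k : ℕ}
    (h : φ.IsHomogeneous k) (c : R) (v : σ → R) : eval (c • v) φ = c ^ k * eval v φ := by
  rw [eval_eq, eval_eq, Finset.mul_sum]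
  refine Finset.sum_congr rfl fun d hd => ?_
  have hk : d.degree = k := by
    rw [Finsupp.degree_eq_weight_one]; exact h (mem_support_iff.mp hd)
  simp only [Pi.smul_apply, smul_eq_mul, mul_pow, Finset.prod_mul_distrib,
    Finset.prod_pow_eq_pow_sum, ← Finsupp.degree_apply, hk]
  ring

theorem IsHomogeneous.hess {g : MvPolynomial (Fin 2) ℝ} {n : ℕ} (hg : g.IsHomogeneous n) :
    (Hess g).IsHomogeneous (2 * (n - 2)) := by
  have h2 : ∀ i j : Fin 2, (pderiv i (pderiv j g)).IsHomogeneous (n - 2) := fun i j => by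
    simpa only [Nat.sub_sub] using (hg.pderiv (i := j)).pderiv (i := i)
  have hdeg : n - 2 + (n - 2) = 2 * (n - 2) := by omega
  rw [Hess, sq, ← hdeg]
  exact ((h2 0 0).mul (h2 1 1)).sub ((h2 0 1).mul (h2 0 1))

theorem totalDegree_hess_sub_hess_le {f g : MvPolynomial (Fin 2) ℝ} {n : ℕ}
    (hf : f.totalDegree ≤ n) (hg : g.totalDegree ≤ n) (hfg : (f - g).totalDegree ≤ n - 1) :
    (Hess f - Hess g).totalDegree ≤ 2 * n - 5 := by
  have h2 : ∀ (p : MvPolynomial (Fin 2) ℝ) (i j : Fin 2),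
      (pderiv i (pderiv j p)).totalDegree ≤ p.totalDegree - 2 := fun p i j =>
    (totalDegree_pderiv_le _ i).trans (by have := totalDegree_pderiv_le p j; omega)
  set r := f - g
  have hsplit : Hess f - Hess g = pderiv 0 (pderiv 0 g) * pderiv 1 (pderiv 1 r)
      + pderiv 0 (pderiv 0 r) * pderiv 1 (pderiv 1 f)
      - (pderiv 0 (pderiv 1 g) + pderiv 0 (pderiv 1 f)) * pderiv 0 (pderiv 1 r) := by
    simp only [Hess, r, map_sub]
    ring
  rw [hsplit]
  refine (totalDegree_sub _ _).trans (max_le ((totalDegree_add _ _).trans (max_le ?_ ?_)) ?_)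
    <;> refine (totalDegree_mul _ _).trans ?_
  · grind [h2 g 0 0, h2 r 1 1]
  · grind [h2 r 0 0, h2 f 1 1]
  · grind [totalDegree_add (pderiv 0 (pderiv 1 g)) (pderiv 0 (pderiv 1 f)),
      h2 g 0 1, h2 f 0 1, h2 r 0 1]

section Growth

variable {σ : Type*} [Fintype σ]

theorem exists_abs_eval_le_mul_one_add_norm_pow {p : MvPolynomial σ ℝ} {d : ℕ}
    (hp : p.totalDegree ≤ d) :
    ∃ C : ℝ, 0 ≤ C ∧ ∀ v : σ → ℝ, |eval v p| ≤ C * (1 + ‖v‖) ^ d := by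
  refine ⟨∑ m ∈ p.support, |coeff m p|, by positivity, fun v => ?_⟩
  have hv : 1 ≤ 1 + ‖v‖ := le_add_of_nonneg_right (norm_nonneg v)
  rw [eval_eq, Finset.sum_mul]
  refine (Finset.abs_sum_le_sum_abs _ _).trans (Finset.sum_le_sum fun m hm => ?_)
  rw [abs_mul]
  gcongr
  calc |∏ i ∈ m.support, v i ^ m i| ≤ ∏ i ∈ m.support, (1 + ‖v‖) ^ m i := by
        rw [Finset.abs_prod]
        gcongr with i
        rw [abs_pow]
        gcongr
        exact (norm_le_pi_norm v i).trans (le_add_of_nonneg_left zero_le_one)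
    _ = (1 + ‖v‖) ^ m.degree := Finset.prod_pow_eq_pow_sum _ _ _
    _ ≤ (1 + ‖v‖) ^ d := pow_le_pow_right₀ hv ((le_totalDegree hm).trans hp)

variable [Nonempty σ]

theorem IsHomogeneous.exists_mul_norm_pow_le_eval {φ : MvPolynomial σ ℝ} {k : ℕ}
    (hφ : φ.IsHomogeneous k) (hpos : ∀ v ≠ 0, 0 < eval v φ) :
    ∃ c > 0, ∀ v : σ → ℝ, c * ‖v‖ ^ k ≤ eval v φ := by
  obtain ⟨u₀, hu₀, hmin⟩ := (isCompact_sphere (0 : σ → ℝ) 1).exists_isMinOn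
    (NormedSpace.sphere_nonempty.2 zero_le_one) (continuous_eval φ).continuousOn
  refine ⟨eval u₀ φ, hpos u₀ (ne_zero_of_mem_unit_sphere ⟨u₀, hu₀⟩), fun v => ?_⟩
  obtain ⟨u, hu, hvu⟩ : ∃ u ∈ Metric.sphere (0 : σ → ℝ) 1, v = ‖v‖ • u := by
    rcases eq_or_ne v 0 with rfl | hv
    · exact ⟨u₀, hu₀, by simp⟩
    · refine ⟨‖v‖⁻¹ • v, by simp [norm_smul, hv], ?_⟩
      rw [smul_smul, mul_inv_cancel₀ (norm_ne_zero_iff.2 hv), one_smul]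
  calc eval u₀ φ * ‖v‖ ^ k ≤ eval u φ * ‖v‖ ^ k := by gcongr; exact hmin hu
    _ = eval (‖v‖ • u) φ := by rw [hφ.eval_smul, mul_comm]
    _ = eval v φ := by rw [← hvu]

theorem exists_forall_norm_gt_eval_add_pos {q r : MvPolynomial σ ℝ} {d : ℕ}
    (hq : q.IsHomogeneous (d + 1)) (hpos : ∀ v ≠ 0, 0 < eval v q) (hr : r.totalDegree ≤ d) :
    ∃ R > 0, ∀ v : σ → ℝ, R < ‖v‖ → 0 < eval v (q + r) := by
  obtain ⟨c, hc, hq_ge⟩ := hq.exists_mul_norm_pow_le_eval hpos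
  obtain ⟨C, hC, hr_le⟩ := exists_abs_eval_le_mul_one_add_norm_pow hr
  refine ⟨1 + C * 2 ^ d / c, by positivity, fun v hv => ?_⟩
  have hv1 : 1 < ‖v‖ := lt_of_le_of_lt (le_add_of_nonneg_right (by positivity)) hv
  have hcv : C * 2 ^ d < c * ‖v‖ := (div_lt_iff₀' hc).1 (by linarith)
  have hr_small : |eval v r| ≤ C * 2 ^ d * ‖v‖ ^ d := calc
    |eval v r| ≤ C * (1 + ‖v‖) ^ d := hr_le v
    _ ≤ C * (2 * ‖v‖) ^ d := by gcongr; linarith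
    _ = C * 2 ^ d * ‖v‖ ^ d := by ring
  have hq_large : c * ‖v‖ * ‖v‖ ^ d ≤ eval v q := by
    simpa [pow_succ', mul_assoc] using hq_ge v
  rw [map_add]
  nlinarith [abs_le.1 hr_small, pow_pos (zero_lt_one.trans hv1) d]

end Growth

end MvPolynomial

-- `Fin 2 → ℝ` carries the sup norm, not the Euclidean one.
theorem sq_add_sq_le_two_mul_norm_sq (x y : ℝ) : x ^ 2 + y ^ 2 ≤ 2 * ‖![x, y]‖ ^ 2 := by
  have hx : |x| ≤ ‖![x, y]‖ := by simpa using norm_le_pi_norm ![x, y] 0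
  have hy : |y| ≤ ‖![x, y]‖ := by simpa using norm_le_pi_norm ![x, y] 1
  nlinarith [sq_abs x, sq_abs y, abs_nonneg x, abs_nonneg y]

/-- If the leading homogeneous part `f_n` of `f` is elliptic (its Hessian is
nonnegative everywhere and vanishes only at the origin), then the Hessian curve
of `f` is compact and `Hess f > 0` outside a large disc. -/
theorem hessian_curve_compact_of_elliptic (n : ℕ) (hn : 3 ≤ n)
    (f : MvPolynomial (Fin 2) ℝ) (hdeg : f.totalDegree = n)
    (hNonneg : ∀ v : Fin 2 → ℝ, 0 ≤ eval v (Hess (homogeneousComponent n f)))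
    (hOnlyOrigin : ∀ v : Fin 2 → ℝ, eval v (Hess (homogeneousComponent n f)) = 0 → v = 0) :
    IsCompact {v : Fin 2 → ℝ | eval v (Hess f) = 0} ∧
      ∃ R : ℝ, 0 < R ∧ ∀ x y : ℝ, x ^ 2 + y ^ 2 > R ^ 2 → 0 < eval ![x, y] (Hess f) := by
  set g := homogeneousComponent n f
  have hg : g.IsHomogeneous n := homogeneousComponent_isHomogeneous n f
  have hHg : (Hess g).IsHomogeneous (2 * n - 5 + 1) := by
    convert hg.hess using 1; omega
  have hpos : ∀ v ≠ 0, 0 < eval v (Hess g) := fun v hv =>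
    (hNonneg v).lt_of_ne' (mt (hOnlyOrigin v) hv)
  obtain ⟨R, hR, hfar⟩ := exists_forall_norm_gt_eval_add_pos hHg hpos
    (totalDegree_hess_sub_hess_le hdeg.le hg.totalDegree_le
      (totalDegree_sub_homogeneousComponent_le hdeg.le))
  simp only [add_sub_cancel] at hfar
  refine ⟨?_, 2 * R, by positivity, fun x y hxy => hfar _ ?_⟩
  · refine Metric.isCompact_iff_isClosed_bounded.2
      ⟨isClosed_eq (continuous_eval _) continuous_const,
        (Metric.isBounded_closedBall (x := 0) (r := R)).subset fun v hv => ?_⟩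
    by_contra hvR
    rw [Metric.mem_closedBall, dist_zero_right, not_le] at hvR
    exact (hfar v hvR).ne' hv
  · have := sq_add_sq_le_two_mul_norm_sq x y
    exact lt_of_pow_lt_pow_left₀ 2 (norm_nonneg _) (by nlinarith)
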